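/- For every n ≥ 2, the map A ↦ v_A is a bijection from the set of subsets of {1, …, n−1} onto the set of lecture hall partitions λ ∈ ℤ^n with λ_n − λ_{n−1} = 1. In particular, there are exactly 2^{n−1} lecture hall partitions of degree 1 with respect to the grading λ ↦ λ_n − λ_{n−1}. -/

import Mathlib

/-
A lecture hall partition is nonnegative and weakly increasing, and strictly increasing from its
first positive entry on. In degree one the inequality at the last step reads
`(n-1)(λ_{n-1} + 1) ≥ n λ_{n-1}`, i.e. `λ_{n-1} ≤ n-1`; so the positive entries among
`λ_1, …, λ_{n-1}` are the increasing enumeration of a subset `A ⊆ {1, …, n-1}`, preceded by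
zeros, and `λ = v_A`. Conversely the entries of `v_A` increase by at least one from the first
positive one on, and the entry in position `i` is at most `i`, since the `j`-th largest element
of `A` is at most `n - j`; these two facts give the lecture hall inequalities.
-/

/-- A lecture hall partition of length `n`: a vector `λ ∈ ℤⁿ` (indexed `0,…,n-1`,
corresponding to `λ_1,…,λ_n`) with `0 ≤ λ_1` and `i·λ_{i+1} ≥ (i+1)·λ_i` for `1 ≤ i ≤ n-1`. -/
def IsLectureHall (n : ℕ) (l : Fin n → ℤ) : Prop :=
  (∀ h : 0 < n, 0 ≤ l ⟨0, h⟩) ∧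
  ∀ i : ℕ, ∀ h : i + 1 < n,
    ((i : ℤ) + 1) * l ⟨i + 1, h⟩ ≥ ((i : ℤ) + 2) * l ⟨i, by omega⟩

/-- For a subset `A = {i_1 < i_2 < ⋯ < i_k} ⊆ {1,…,n-1}`, the vector
`v_A = (0,…,0, i_1, i_2, …, i_k, i_k + 1) ∈ ℤⁿ`: `n - k - 1` leading zeros, then the
elements of `A` in increasing order, and finally `max(A) + 1` (with `v_∅ = (0,…,0,1)`). -/
def vA (n : ℕ) (A : Finset ℕ) : Fin n → ℤ := fun j =>
  if (j : ℕ) = n - 1 then ((A.sort (· ≤ ·)).getLastD 0 : ℤ) + 1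
  else if n - 1 - A.card ≤ (j : ℕ) then
    (((A.sort (· ≤ ·)).getD ((j : ℕ) - (n - 1 - A.card)) 0 : ℕ) : ℤ)
  else 0

open Finset

section LectureHall

variable {n : ℕ} {l : Fin n → ℤ}

theorem isLectureHall_of_add_one_le (h0 : ∀ j, 0 ≤ l j)
    (hle : ∀ i (h : i + 1 < n), l ⟨i, by omega⟩ ≤ i + 1)
    (hstep : ∀ i (h : i + 1 < n), 0 < l ⟨i, by omega⟩ → l ⟨i, by omega⟩ + 1 ≤ l ⟨i + 1, h⟩) :
    IsLectureHall n l := by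
  refine ⟨fun _ => h0 _, fun i h => ?_⟩
  rcases (h0 ⟨i, by omega⟩).eq_or_lt with hzero | hpos
  · rw [← hzero]
    nlinarith [h0 ⟨i + 1, h⟩]
  · nlinarith [hle i h, hstep i h hpos]

theorem IsLectureHall.nonneg (hl : IsLectureHall n l) (j : Fin n) : 0 ≤ l j := by
  obtain ⟨j, hj⟩ := j
  induction j with
  | zero => exact hl.1 hj
  | succ j ih => nlinarith [hl.2 j hj, ih (by omega)]

theorem IsLectureHall.monotone (hl : IsLectureHall n l) : Monotone l := by
  cases n with
  | zero => exact fun a => a.elim0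
  | succ n =>
    refine Fin.monotone_iff_le_succ.2 fun i => ?_
    show l ⟨i, by omega⟩ ≤ l ⟨i + 1, by omega⟩
    nlinarith [hl.2 i (by omega), hl.nonneg ⟨i, by omega⟩]

theorem IsLectureHall.strictMonoOn (hl : IsLectureHall n l) : StrictMonoOn l {j | 0 < l j} := by
  rintro ⟨a, ha⟩ hpos ⟨b, hb⟩ - hab
  rw [Fin.mk_lt_mk] at hab
  have hstep : l ⟨a, ha⟩ < l ⟨a + 1, by omega⟩ := by
    nlinarith [hl.2 a (by omega), show 0 < l ⟨a, ha⟩ from hpos]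
  exact hstep.trans_le (hl.monotone (Fin.mk_le_mk.2 hab))

theorem IsLectureHall.exists_eq_zero_iff_lt (hl : IsLectureHall n l) (j₁ : ℕ) (h : j₁ < n)
    (hj₁ : 0 < l ⟨j₁, h⟩) : ∃ j₀ ≤ j₁, ∀ j (hj : j < n), l ⟨j, hj⟩ = 0 ↔ j < j₀ := by
  obtain ⟨j₀, hj₀, hmin⟩ := wellFounded_lt.has_min {j | 0 < l j} ⟨_, hj₁⟩
  refine ⟨j₀, not_lt.1 (hmin _ hj₁), fun j hj => ⟨fun hzero => ?_, fun hlt => ?_⟩⟩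
  · by_contra! h
    exact hzero.not_gt (hj₀.trans_le (hl.monotone (show j₀ ≤ ⟨j, hj⟩ from h)))
  · exact le_antisymm (not_lt.1 fun h => hmin _ h hlt) (hl.nonneg _)

theorem IsLectureHall.le_of_sub_eq_one (hl : IsLectureHall n l) (hn : 1 < n)
    (hdeg : l ⟨n - 1, by omega⟩ - l ⟨n - 2, by omega⟩ = 1) :
    l ⟨n - 2, by omega⟩ ≤ (n - 1 : ℕ) := by
  obtain ⟨m, rfl⟩ : ∃ m, n = m + 2 := ⟨n - 2, by omega⟩
  change l ⟨m + 1, by omega⟩ - l ⟨m, by omega⟩ = 1 at hdeg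
  change l ⟨m, by omega⟩ ≤ (m + 1 : ℕ)
  push_cast
  nlinarith [hl.2 m (by omega)]

theorem eq_of_sub_eq_one_of_forall_lt (hn : 1 < n) {l' : Fin n → ℤ}
    (hl : l ⟨n - 1, by omega⟩ - l ⟨n - 2, by omega⟩ = 1)
    (hl' : l' ⟨n - 1, by omega⟩ - l' ⟨n - 2, by omega⟩ = 1)
    (h : ∀ j (hj : j < n - 1), l ⟨j, by omega⟩ = l' ⟨j, by omega⟩) : l = l' := by
  funext ⟨j, hjn⟩
  by_cases hj : j < n - 1
  · exact h j hj
  · obtain rfl : j = n - 1 := by omega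
    linarith [h (n - 2) (by omega)]

end LectureHall

theorem StrictMono.apply_add_rev_le {k M : ℕ} {f : Fin k → ℕ} (hf : StrictMono f)
    (hM : ∀ i, f i ≤ M) (i : Fin k) : f i + i.rev ≤ M := by
  have hsub : (Ioi i).map ⟨f, hf.injective⟩ ⊆ Ioc (f i) M := by
    intro x hx
    obtain ⟨a, ha, rfl⟩ := mem_map.1 hx
    exact mem_Ioc.2 ⟨hf (mem_Ioi.1 ha), hM a⟩
  have hcard := card_le_card hsub
  rw [card_map, Fin.card_Ioi, Nat.card_Ioc] at hcard
  rw [Fin.val_rev]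
  have := hM i
  omega

section vA

variable {n : ℕ} {A : Finset ℕ}

theorem vA_apply_of_lt (j : ℕ) (hj : j < n - 1 - A.card) : vA n A ⟨j, by omega⟩ = 0 := by
  simp only [vA]
  rw [if_neg (by omega), if_neg (by omega)]

theorem vA_apply_of_le {k : ℕ} (h : A.card = k) (j : ℕ) (hj : j < n - 1)
    (hjk : n - 1 - k ≤ j) :
    vA n A ⟨j, by omega⟩ = A.orderEmbOfFin h ⟨j - (n - 1 - k), by omega⟩ := by
  subst h
  simp only [vA]
  rw [if_neg (by omega), if_pos hjk, List.getD_eq_getElem _ _ (by simp; omega)]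
  rfl

theorem sort_getLastD_eq_orderEmbOfFin (hA : A.Nonempty) :
    (A.sort (· ≤ ·)).getLastD 0 = A.orderEmbOfFin rfl ⟨A.card - 1, by simp [hA.card_pos]⟩ := by
  rw [List.getLastD_eq_getLast?, List.getLast?_eq_getElem?, orderEmbOfFin_apply]
  simp [hA.card_pos]

theorem card_le_of_subset_Icc (hA : A ⊆ Icc 1 (n - 1)) : A.card ≤ n - 1 := by
  simpa using card_le_card hA

theorem vA_sub_vA_eq_one (hn : 1 < n) (hA : A.card ≤ n - 1) :
    vA n A ⟨n - 1, by omega⟩ - vA n A ⟨n - 2, by omega⟩ = 1 := by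
  have hlast : vA n A ⟨n - 1, by omega⟩ = ((A.sort (· ≤ ·)).getLastD 0 : ℤ) + 1 := if_pos rfl
  rcases A.eq_empty_or_nonempty with rfl | hne
  · rw [hlast, vA_apply_of_lt (n - 2) (by simp; omega)]
    simp
  · rw [hlast, vA_apply_of_le rfl (n - 2) (by omega) (by have := hne.card_pos; omega),
      sort_getLastD_eq_orderEmbOfFin hne]
    simp only [show n - 2 - (n - 1 - A.card) = A.card - 1 by omega]
    ring

theorem vA_nonneg (j : Fin n) : 0 ≤ vA n A j := by
  unfold vA
  split_ifs <;> positivity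

theorem vA_apply_le_add_one (hA : A ⊆ Icc 1 (n - 1)) (i : ℕ) (h : i + 1 < n) :
    vA n A ⟨i, by omega⟩ ≤ i + 1 := by
  by_cases hik : i < n - 1 - A.card
  · rw [vA_apply_of_lt i hik]
    positivity
  · have hA' := card_le_of_subset_Icc hA
    rw [vA_apply_of_le rfl i (by omega) (not_lt.1 hik)]
    have := (A.orderEmbOfFin rfl).strictMono.apply_add_rev_le
      (fun j => (mem_Icc.1 (hA (A.orderEmbOfFin_mem rfl j))).2) ⟨i - (n - 1 - A.card), by omega⟩
    simp only [Fin.val_rev] at this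
    omega

theorem vA_add_one_le_of_pos (hA : A ⊆ Icc 1 (n - 1)) (i : ℕ) (h : i + 1 < n)
    (hpos : 0 < vA n A ⟨i, by omega⟩) : vA n A ⟨i, by omega⟩ + 1 ≤ vA n A ⟨i + 1, h⟩ := by
  have hA' := card_le_of_subset_Icc hA
  by_cases hi : i + 1 = n - 1
  · obtain rfl : n = i + 2 := by omega
    have hdeg := vA_sub_vA_eq_one (by omega) hA'
    change vA (i + 2) A ⟨i + 1, h⟩ - vA (i + 2) A ⟨i, by omega⟩ = 1 at hdeg
    linarith
  · have hik : n - 1 - A.card ≤ i := by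
      by_contra! hik
      rw [vA_apply_of_lt i hik] at hpos
      exact hpos.false
    rw [vA_apply_of_le rfl i (by omega) hik, vA_apply_of_le rfl (i + 1) (by omega) (by omega)]
    have := (A.orderEmbOfFin rfl).strictMono
      (show (⟨i - (n - 1 - A.card), by omega⟩ : Fin A.card) < ⟨i + 1 - (n - 1 - A.card), by omega⟩
        from Fin.mk_lt_mk.2 (by omega))
    omega

theorem vA_isLectureHall (hA : A ⊆ Icc 1 (n - 1)) : IsLectureHall n (vA n A) :=
  isLectureHall_of_add_one_le vA_nonneg (vA_apply_le_add_one hA) (vA_add_one_le_of_pos hA)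

theorem mem_iff_exists_vA_eq (hA : A ⊆ Icc 1 (n - 1)) (x : ℕ) :
    x ∈ A ↔ 0 < x ∧ ∃ j, ∃ hj : j < n - 1, vA n A ⟨j, by omega⟩ = x := by
  constructor
  · intro hx
    refine ⟨(mem_Icc.1 (hA hx)).1, ?_⟩
    obtain ⟨i, rfl⟩ : x ∈ Set.range (A.orderEmbOfFin rfl) := by simpa using hx
    have hA' := card_le_of_subset_Icc hA
    refine ⟨i + (n - 1 - A.card), by omega, ?_⟩
    rw [vA_apply_of_le rfl _ (by omega) (by simp)]
    simp
  · rintro ⟨hx, j, hj, hjx⟩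
    by_cases hjk : j < n - 1 - A.card
    · rw [vA_apply_of_lt j hjk] at hjx
      omega
    · rw [vA_apply_of_le rfl j hj (by omega)] at hjx
      exact (Nat.cast_injective hjx) ▸ A.orderEmbOfFin_mem rfl _

theorem vA_injOn : Set.InjOn (vA n) {A | A ⊆ Icc 1 (n - 1)} := fun A hA B hB hAB => by
  ext x
  rw [mem_iff_exists_vA_eq hA, mem_iff_exists_vA_eq hB, hAB]

theorem vA_image_apply {k : ℕ} {f : Fin k → ℕ} (hf : StrictMono f) (j : ℕ) (hj : j < n - 1) :
    vA n (univ.image f) ⟨j, by omega⟩ =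
      if h : n - 1 - k ≤ j then f ⟨j - (n - 1 - k), by omega⟩ else 0 := by
  have hcard : (univ.image f).card = k := by
    rw [card_image_of_injective _ hf.injective, card_univ, Fintype.card_fin]
  split_ifs with hjk
  · rw [vA_apply_of_le hcard j hj hjk,
      ← orderEmbOfFin_unique hcard (fun i => mem_image_of_mem f (mem_univ i)) hf]
  · exact vA_apply_of_lt j (by omega)

end vA

theorem exists_vA_eq_of_isLectureHall {n : ℕ} {l : Fin n → ℤ} (hn : 1 < n)
    (hl : IsLectureHall n l) (hdeg : l ⟨n - 1, by omega⟩ - l ⟨n - 2, by omega⟩ = 1) :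
    ∃ A ⊆ Icc 1 (n - 1), vA n A = l := by
  obtain ⟨j₀, hj₀, hzero⟩ := hl.exists_eq_zero_iff_lt (n - 1) (by omega)
    (by linarith [hl.nonneg ⟨n - 2, by omega⟩])
  have hpos : ∀ j (hj : j < n), j₀ ≤ j → 0 < l ⟨j, hj⟩ := fun j hj hle =>
    (hl.nonneg _).lt_of_ne' fun h => by have := (hzero j hj).1 h; omega
  let f : Fin (n - 1 - j₀) → ℕ := fun i => (l ⟨j₀ + i, by omega⟩).toNat
  have hlf : ∀ i, (f i : ℤ) = l ⟨j₀ + i, by omega⟩ := fun i => Int.toNat_of_nonneg (hl.nonneg _)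
  have hf : StrictMono f := fun a b hab =>
    (Int.toNat_lt_toNat (hpos _ _ (by omega))).2
      (hl.strictMonoOn (hpos _ _ (by omega)) (hpos _ _ (by omega)) (Fin.mk_lt_mk.2 (by omega)))
  have hsub : univ.image f ⊆ Icc 1 (n - 1) := by
    intro x hx
    obtain ⟨i, -, rfl⟩ := mem_image.1 hx
    have hle := hl.monotone
      (show (⟨j₀ + i, by omega⟩ : Fin n) ≤ ⟨n - 2, by omega⟩ from Fin.mk_le_mk.2 (by omega))
    have := hl.le_of_sub_eq_one hn hdeg
    have := hpos (j₀ + i) (by omega) (by omega)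
    have := hlf i
    rw [mem_Icc]
    omega
  refine ⟨univ.image f, hsub, eq_of_sub_eq_one_of_forall_lt hn
    (vA_sub_vA_eq_one hn (card_le_of_subset_Icc hsub)) hdeg fun j hj => ?_⟩
  rw [vA_image_apply hf j hj]
  split_ifs with hjk
  · rw [hlf]
    congr 2
    dsimp only
    omega
  · exact ((hzero j _).2 (by omega)).symm

/-- For every `n ≥ 2`, the map `A ↦ v_A` is a bijection from the subsets of `{1,…,n-1}`
onto the lecture hall partitions `λ ∈ ℤⁿ` with `λ_n - λ_{n-1} = 1`; in particular there
are exactly `2^{n-1}` lecture hall partitions of degree `1`. -/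
theorem vA_bijOn_degree_one (n : ℕ) (hn : 2 ≤ n) :
    Set.BijOn (vA n) {A : Finset ℕ | A ⊆ Finset.Icc 1 (n - 1)}
      {l : Fin n → ℤ |
        IsLectureHall n l ∧ l ⟨n - 1, by omega⟩ - l ⟨n - 2, by omega⟩ = 1} ∧
    Nat.card {l : Fin n → ℤ //
        IsLectureHall n l ∧ l ⟨n - 1, by omega⟩ - l ⟨n - 2, by omega⟩ = 1} =
      2 ^ (n - 1) := by
  have hbij : Set.BijOn (vA n) {A : Finset ℕ | A ⊆ Icc 1 (n - 1)}
      {l | IsLectureHall n l ∧ l ⟨n - 1, by omega⟩ - l ⟨n - 2, by omega⟩ = 1} :=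
    ⟨fun A hA => ⟨vA_isLectureHall hA, vA_sub_vA_eq_one hn (card_le_of_subset_Icc hA)⟩,
      vA_injOn, fun l hl => exists_vA_eq_of_isLectureHall hn hl.1 hl.2⟩
  have hdom : {A : Finset ℕ | A ⊆ Icc 1 (n - 1)} = ↑(Icc 1 (n - 1)).powerset := by
    ext A
    exact mem_powerset.symm
  refine ⟨hbij, (Nat.card_congr hbij.equiv.symm).trans ?_⟩
  rw [hdom, Nat.card_coe_set_eq, Set.ncard_coe_finset, card_powerset, Nat.card_Icc,
    Nat.add_sub_cancel]
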